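/- Consider the uniform-strength CN model with γ ≥ 1. There is no nonempty CN-war-stable network whose maximum degree is at most 1. That is, if every country has at most one ally and the network is nonempty, then one of conditions (S1), (S2), (S3) fails. -/

import Mathlib

/-!
Let `uv` be an alliance and `w` a third country; with maximum degree one, `v` is the only ally
of `u` and `u` the only ally of `v`. If `γ < 2`, adding the link `vw` creates the clique `{v, w}`
of size `2` against `u`, whose only ally is inside it, so `u` becomes vulnerable and (S2) fails.
If `γ ≥ 2`, every clique of a subnetwork has at most two members while the threshold of every
country is at least `γ`, so nobody is vulnerable after deleting `uv` and (S3) fails.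
-/

open Finset

/-- The allies (neighbors) of `i` in network `g`, as a `Finset`. -/
noncomputable def nbrs {V : Type*} [Fintype V] (g : SimpleGraph V) (i : V) : Finset V :=
  @Finset.filter _ (fun j => g.Adj i j) (Classical.decPred _) Finset.univ

/-- The network `g` with the alliance `jk` added. -/
def addE {V : Type*} (g : SimpleGraph V) (j k : V) : SimpleGraph V :=
  g ⊔ SimpleGraph.fromEdgeSet {s(j, k)}

/-- The network `g` with the alliance `jk` deleted. -/
def delE {V : Type*} (g : SimpleGraph V) (j k : V) : SimpleGraph V :=
  g.deleteEdges {s(j, k)}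

/-- CN-vulnerability with uniform strengths `M C = |C|` and constant `γ`:
country `i` is CN-vulnerable at `g` if some clique `C` of `g` not containing `i`
satisfies `|C| > γ · (1 + |N_i(g) \ C|)`. -/
def CNVul {V : Type*} [Fintype V] [DecidableEq V] (g : SimpleGraph V) (γ : ℝ) (i : V) :
    Prop :=
  ∃ C : Finset V, g.IsClique ↑C ∧ i ∉ C ∧
    γ * (1 + ((nbrs g i) \ C).card) < (C.card : ℝ)

/-- CN-war-stability: (S1) no country CN-vulnerable; (S2) no country CN-vulnerable after
adding any non-link; (S3) both endpoints of any link become CN-vulnerable upon its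
deletion. -/
def CNWarStable {V : Type*} [Fintype V] [DecidableEq V] (g : SimpleGraph V) (γ : ℝ) :
    Prop :=
  (∀ v : V, ¬ CNVul g γ v) ∧
  (∀ j k : V, j ≠ k → ¬ g.Adj j k → ∀ v : V, ¬ CNVul (addE g j k) γ v) ∧
  (∀ j k : V, g.Adj j k → CNVul (delE g j k) γ j ∧ CNVul (delE g j k) γ k)

section

variable {V : Type*}

lemma addE_adj_self {g : SimpleGraph V} {j k : V} (h : j ≠ k) : (addE g j k).Adj j k :=
  Or.inr ⟨rfl, h⟩

lemma addE_adj_of_ne {g : SimpleGraph V} {j k a b : V} (haj : a ≠ j) (hak : a ≠ k) :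
    (addE g j k).Adj a b ↔ g.Adj a b := by
  simp [addE, haj, hak]

variable [Fintype V]

lemma mem_nbrs {g : SimpleGraph V} {i j : V} : j ∈ nbrs g i ↔ g.Adj i j := by
  simp [nbrs]

lemma nbrs_subset_singleton_of_adj {g : SimpleGraph V} {u v : V}
    (hdeg : (nbrs g u).card ≤ 1) (huv : g.Adj u v) : nbrs g u ⊆ {v} :=
  fun x hx => mem_singleton.mpr (card_le_one.mp hdeg x hx v (mem_nbrs.mpr huv))

variable [DecidableEq V]

lemma card_le_two_of_isClique {g g' : SimpleGraph V} (hle : g' ≤ g)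
    (hdeg : ∀ v, (nbrs g v).card ≤ 1) {C : Finset V} (hC : g'.IsClique ↑C) : C.card ≤ 2 := by
  rcases C.eq_empty_or_nonempty with rfl | ⟨a, ha⟩
  · simp
  have hsub : C ⊆ insert a (nbrs g a) := by
    intro x hx
    rcases eq_or_ne x a with rfl | hxa
    · exact mem_insert_self x _
    · exact mem_insert_of_mem (mem_nbrs.mpr (hle (hC ha hx hxa.symm)))
  calc C.card ≤ (insert a (nbrs g a)).card := card_le_card hsub
    _ ≤ (nbrs g a).card + 1 := card_insert_le _ _
    _ ≤ 2 := by have := hdeg a; omega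

lemma not_cnVul_of_le {g g' : SimpleGraph V} (hle : g' ≤ g) (hdeg : ∀ v, (nbrs g v).card ≤ 1)
    {γ : ℝ} (hγ : 2 ≤ γ) (i : V) : ¬ CNVul g' γ i := by
  rintro ⟨C, hC, -, hlt⟩
  have hC2 : (C.card : ℝ) ≤ 2 := by exact_mod_cast card_le_two_of_isClique hle hdeg hC
  have hγle : γ ≤ γ * (1 + (nbrs g' i \ C).card) :=
    le_mul_of_one_le_right (by linarith) (by simp)
  linarith

lemma cnVul_addE {g : SimpleGraph V} {u v w : V} {γ : ℝ} (hu : nbrs g u ⊆ {v}) (hvw : v ≠ w)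
    (huv : u ≠ v) (huw : u ≠ w) (hγ : γ < 2) : CNVul (addE g v w) γ u := by
  refine ⟨{v, w}, ?_, by simp [huv, huw], ?_⟩
  · rw [coe_pair]
    exact SimpleGraph.isClique_pair.mpr fun _ => addE_adj_self hvw
  · have hnbrs : nbrs (addE g v w) u \ {v, w} = ∅ := by
      refine sdiff_eq_empty_iff_subset.mpr fun x hx => ?_
      rw [mem_nbrs, addE_adj_of_ne huv huw] at hx
      exact mem_insert.mpr (Or.inl (mem_singleton.mp (hu (mem_nbrs.mpr hx))))
    rw [hnbrs, card_pair hvw]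
    simpa using hγ

end

theorem no_cn_stable_maxdeg_one_general {n : ℕ} (hn : 3 ≤ n) (γ : ℝ)
    (g : SimpleGraph (Fin n)) (hne : ∃ u v : Fin n, g.Adj u v)
    (hdeg : ∀ v : Fin n, (nbrs g v).card ≤ 1) :
    ¬ CNWarStable g γ := by
  obtain ⟨u, v, huv⟩ := hne
  obtain ⟨w, -, hw⟩ := exists_mem_notMem_of_card_lt_card (s := {u, v}) (t := univ)
    (card_le_two.trans_lt (by rw [card_univ, Fintype.card_fin]; omega))
  rw [mem_insert, mem_singleton, not_or] at hw
  rintro ⟨-, hS2, hS3⟩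
  rcases lt_or_ge γ 2 with hγ | hγ
  · have hvw : ¬ g.Adj v w := fun h =>
      hw.1 (mem_singleton.mp (nbrs_subset_singleton_of_adj (hdeg v) huv.symm (mem_nbrs.mpr h)))
    exact hS2 v w (Ne.symm hw.2) hvw u
      (cnVul_addE (nbrs_subset_singleton_of_adj (hdeg u) huv) (Ne.symm hw.2) huv.ne
        (Ne.symm hw.1) hγ)
  · exact not_cnVul_of_le (SimpleGraph.deleteEdges_le _) hdeg hγ u (hS3 u v huv).1

/-- with `γ ≥ 1`, no nonempty network of maximum degree at most 1 is
CN-war-stable. -/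
theorem no_cn_stable_maxdeg_one {n : ℕ} (hn : 3 ≤ n) (γ : ℝ) (hγ : 1 ≤ γ)
    (g : SimpleGraph (Fin n)) (hne : ∃ u v : Fin n, g.Adj u v)
    (hdeg : ∀ v : Fin n, (nbrs g v).card ≤ 1) :
    ¬ CNWarStable g γ :=
  no_cn_stable_maxdeg_one_general hn γ g hne hdeg
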